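/- Let λ be a cardinal such that Pr_{ω₁}(λ) holds. If B ⊆ 2^ω × 2^ω is an analytic set containing a (λ, λ)-rectangle A₁ × A₂ with A₁, A₂ ⊆ 2^ω each of cardinality λ, then B contains a perfect rectangle P₁ × P₂ with P₁, P₂ ⊆ 2^ω nonempty perfect sets. -/

import Mathlib

/-!
Write `B = f(ω^ω)` with `f` continuous and fix a bijection `e : A₁ ≃ A₂`. Equip `A₁` with
countably many relations recording, for all pairs `(p, q)` of entries of a finite tuple,
finite prefixes of `p`, of `e q` and of an `f`-preimage `η(p, q)` of `(p, e q)`. By `Pr_{ω₁}(λ)` this structure has finite sets of every rank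
below `ω₁`, and one rank step at a point produces a new point with the same quantifier-free
type, i.e. with the same prefixes up to any prescribed length.

A fusion argument then builds a Cantor scheme of configurations `X_s, Y_t` (`s, t ∈ 2^n`): a
configuration realised with rank `β + 2^(n+1)` is doubled, each point receiving a copy that
mimics it below the current level, and since there are only countably many finite patterns
of doubled configurations, one of them is realised for cofinally many, hence all, `β < ω₁`.
Along branches `ξ, ζ ∈ 2^ω` the points and the witnesses `η(X_{ξ|n}, Y_{ζ|n})` converge;
the limits `u ξ`, `v ζ` sweep out perfect sets, and continuity of `f` gives
`f (lim η) = (u ξ, v ζ)`.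
-/

open FirstOrder Cardinal

universe u

namespace Sh522

/-- `a ∈ clLt L M κ B` iff `a` is in the `<κ`-closure of `B` in `M`:
for some quantifier-free formula `φ(y, x₁, …, xₙ)` and parameters `b` from `B`,
`M ⊨ φ[a, b]` and the set of solutions of `φ(−, b)` has cardinality `< κ`. -/
def clLt (L : FirstOrder.Language.{u, u}) (M : Type u) [L.Structure M]
    (κ : Cardinal.{u}) (B : Set M) : Set M :=
  {a | ∃ (n : ℕ) (φ : L.Formula (Fin (n + 1))),
      FirstOrder.Language.BoundedFormula.IsQF φ ∧
      ∃ b : Fin n → M, (∀ i, b i ∈ B) ∧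
        φ.Realize (Fin.cons a b) ∧
        Cardinal.mk {x : M // φ.Realize (Fin.cons x b)} < κ}

/-- `rk^l(w, M; <κ) ≥ 0`. -/
def rkBase (L : FirstOrder.Language.{u, u}) (M : Type u) [L.Structure M]
    (κ : Cardinal.{u}) (w : Set M) : Prop :=
  w.Finite ∧ w.Nonempty ∧ ∀ a ∈ w, a ∉ clLt L M κ (w \ {a})

/-- The successor step of the rank: `rk^l(w, M; <κ) ≥ β + 1` where `P` is
`rk^l(−, M; <κ) ≥ β`. -/
def rkStep (L : FirstOrder.Language.{u, u}) (M : Type u) [L.Structure M]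
    (l : ℕ) (κ : Cardinal.{u}) (P : Set M → Prop) (w : Set M) : Prop :=
  w.Finite ∧ w.Nonempty ∧
  ∀ (n : ℕ) (a : Fin n → M), Function.Injective a → Set.range a = w →
    ∀ (k : Fin n) (φ : L.Formula (Fin n)),
      FirstOrder.Language.BoundedFormula.IsQF φ → φ.Realize a →
      ∃ b : Fin 2 → Fin n → M,
        P (Set.range fun p : Fin 2 × Fin n => b p.1 p.2) ∧
        (∀ i : Fin 2, φ.Realize (b i)) ∧
        b 0 k ≠ b 1 k ∧
        (∀ m : Fin n, m ≠ k → b 0 m = b 1 m) ∧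
        (l = 0 → ∀ m : Fin n, b 0 m = a m)

/-- `rkGe L M l κ α w` says `rk^l(w, M; <κ) ≥ α`. -/
noncomputable def rkGe (L : FirstOrder.Language.{u, u}) (M : Type u) [L.Structure M]
    (l : ℕ) (κ : Cardinal.{u}) (α : Ordinal.{u}) : Set M → Prop :=
  Ordinal.limitRecOn (motive := fun _ => Set M → Prop) α
    (rkBase L M κ)
    (fun _ ih => rkStep L M l κ ih)
    (fun o _ ih w => ∀ (β : Ordinal.{u}) (h : β < o), ih β h w)

/-- `Pr l α lam bound θ` is `Pr^l_α(lam; <bound, θ)`: every model with universe of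
cardinality `lam` and vocabulary of cardinality `≤ θ` has `rk^l(M; <bound) ≥ α`,
where `rk^l(M; <bound) = sup { rk^l(w, M; <bound) + 1 : w ∈ [M]* }`. -/
def Pr (l : ℕ) (α : Ordinal.{u}) (lam bound θ : Cardinal.{u}) : Prop :=
  ∀ (L : FirstOrder.Language.{u, u}) (M : Type u) (S : L.Structure M),
    Cardinal.mk M = lam → L.card ≤ θ →
    ∀ β < α, ∃ w : Set M, w.Finite ∧ w.Nonempty ∧ @rkGe L M S l bound β w

section Rank

universe v

variable {L : FirstOrder.Language.{v, v}} {M : Type v} [L.Structure M] {l : ℕ} {κ : Cardinal.{v}}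

theorem rkGe_zero : rkGe L M l κ 0 = rkBase L M κ :=
  Ordinal.limitRecOn_zero _ _ _

theorem rkGe_succ (β : Ordinal.{v}) :
    rkGe L M l κ (β + 1) = rkStep L M l κ (rkGe L M l κ β) := by
  rw [rkGe, Ordinal.limitRecOn_add_one]
  rfl

theorem rkGe_limit {o : Ordinal.{v}} (ho : Order.IsSuccLimit o) (w : Set M) :
    rkGe L M l κ o w ↔ ∀ β < o, rkGe L M l κ β w := by
  rw [rkGe, Ordinal.limitRecOn_limit _ _ _ _ ho]
  exact Iff.rfl

theorem clLt_mono {B B' : Set M} (h : B ⊆ B') : clLt L M κ B ⊆ clLt L M κ B' := by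
  rintro a ⟨n, φ, hφ, b, hb, hab, hcard⟩
  exact ⟨n, φ, hφ, b, fun i => h (hb i), hab, hcard⟩

theorem rkGe_mono (β : Ordinal.{v}) {w w' : Set M} (hsub : w' ⊆ w) (hne : w'.Nonempty)
    (h : rkGe L M l κ β w) : rkGe L M l κ β w' := by
  induction β using Ordinal.limitRecOn generalizing w w' with
  | zero =>
    rw [rkGe_zero] at h ⊢
    exact ⟨h.1.subset hsub, hne, fun a ha hcl =>
      h.2.2 a (hsub ha) (clLt_mono (Set.sdiff_subset_sdiff_left hsub) hcl)⟩
  | add_one β ih =>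
    rw [rkGe_succ] at h ⊢
    obtain ⟨hfin, -, hstep⟩ := h
    refine ⟨hfin.subset hsub, hne, fun n' a' ha' hra' k' φ' hφ' hφa' => ?_⟩
    obtain ⟨N, a, ha, hra⟩ := hfin.fin_param
    have hmem : ∀ j, a' j ∈ Set.range a := fun j => hra ▸ hsub (hra' ▸ Set.mem_range_self j)
    choose ι hι using hmem
    have hιinj : Function.Injective ι := fun i j hij => ha' (by rw [← hι, ← hι, hij])
    have hrel : (φ'.relabel ι).Realize a ↔ φ'.Realize a' := by
      rw [Language.Formula.realize_relabel, show a ∘ ι = a' from funext hι]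
    obtain ⟨b, hb, hbφ, hbk, hbm, hb0⟩ :=
      hstep N a ha hra (ι k') (φ'.relabel ι) (hφ'.relabel (Sum.inl ∘ ι)) (hrel.2 hφa')
    refine ⟨fun i => b i ∘ ι, ih ?_ ⟨b 0 (ι k'), (0, k'), rfl⟩ hb, fun i => ?_, hbk,
      fun m hm => hbm (ι m) (hιinj.ne hm), fun hl m => ?_⟩
    · rintro x ⟨⟨i, j⟩, rfl⟩
      exact ⟨(i, ι j), rfl⟩
    · simpa only [Language.Formula.realize_relabel] using hbφ i
    · simp only [Function.comp_apply, hb0 hl, hι]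
  | limit o ho ih =>
    rw [rkGe_limit ho] at h ⊢
    exact fun β hβ => ih β hβ hsub hne (h β hβ)

theorem rkGe_of_rkGe_succ {β : Ordinal.{v}} {w : Set M} (h : rkGe L M 0 κ (β + 1) w) :
    rkGe L M 0 κ β w := by
  rw [rkGe_succ] at h
  obtain ⟨hfin, ⟨x, hx⟩, hstep⟩ := h
  obtain ⟨N, a, ha, rfl⟩ := hfin.fin_param
  obtain ⟨k, -⟩ := hx
  obtain ⟨b, hb, -, -, -, hb0⟩ :=
    hstep N a ha rfl k ⊤ Language.BoundedFormula.IsQF.top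
      (Language.BoundedFormula.realize_top.2 trivial)
  refine rkGe_mono β ?_ ⟨a k, k, rfl⟩ hb
  rintro _ ⟨i, rfl⟩
  exact ⟨(0, i), hb0 rfl i⟩

theorem rkGe_anti {β γ : Ordinal.{v}} {w : Set M} (hle : β ≤ γ) (h : rkGe L M 0 κ γ w) :
    rkGe L M 0 κ β w := by
  induction γ using Ordinal.limitRecOn generalizing β with
  | zero => rwa [nonpos_iff_eq_zero.mp hle]
  | add_one γ ih =>
    rcases hle.eq_or_lt with rfl | hlt
    · exact h
    · exact ih (Order.lt_add_one_iff.mp hlt) (rkGe_of_rkGe_succ h)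
  | limit o ho ih =>
    rcases hle.eq_or_lt with rfl | hlt
    · exact h
    · exact (rkGe_limit ho w).mp h β hlt

theorem exists_update_of_rkGe_succ {N : ℕ} {a : Fin N → M} (ha : Function.Injective a)
    {β : Ordinal.{v}} (h : rkGe L M 0 κ (β + 1) (Set.range a)) (k : Fin N)
    {φ : L.Formula (Fin N)} (hφ : φ.IsQF) (hφa : φ.Realize a) :
    ∃ c, c ≠ a k ∧ rkGe L M 0 κ β (insert c (Set.range a)) ∧
      φ.Realize (Function.update a k c) := by
  rw [rkGe_succ] at h
  obtain ⟨b, hb, hbφ, hbk, hbm, hb0⟩ := h.2.2 N a ha rfl k φ hφ hφa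
  have hb0 : b 0 = a := funext (hb0 rfl)
  have hb1 : b 1 = Function.update a k (b 1 k) := by
    ext m
    rcases eq_or_ne m k with rfl | hm
    · simp
    · rw [Function.update_of_ne hm, ← hbm m hm, hb0]
  have hrange : (Set.range fun p : Fin 2 × Fin N => b p.1 p.2) = insert (b 1 k) (Set.range a) := by
    apply Set.Subset.antisymm
    · rintro _ ⟨⟨i, j⟩, rfl⟩
      fin_cases i
      · exact Or.inr ⟨j, by simp [hb0]⟩
      · rcases eq_or_ne j k with rfl | hj
        · exact Or.inl rfl
        · exact Or.inr ⟨j, by simp [← hb0, hbm j hj]⟩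
    · rintro _ (rfl | ⟨j, rfl⟩)
      · exact ⟨(1, k), rfl⟩
      · exact ⟨(0, j), by simp [hb0]⟩
  exact ⟨b 1 k, hb0 ▸ hbk.symm, hrange ▸ hb, hb1 ▸ hbφ 1⟩

end Rank

section Diagram

open FirstOrder.Language PiNat

def diagramLang (V : Type) : FirstOrder.Language.{0, 0} where
  Functions _ := Empty
  Relations N := Σ l : ℕ, Fin N → Fin N → Fin l → V

instance (V : Type) (N : ℕ) : IsEmpty ((diagramLang V).Functions N) :=
  inferInstanceAs (IsEmpty Empty)

instance (V : Type) [Countable V] (N : ℕ) : Countable ((diagramLang V).Relations N) :=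
  inferInstanceAs (Countable (Σ l : ℕ, Fin N → Fin N → Fin l → V))

theorem diagramLang_card_le (V : Type) [Countable V] : (diagramLang V).card ≤ ℵ₀ :=
  Cardinal.mk_le_aleph0

variable {M V : Type} (obs : M → M → ℕ → V)

/-- The relation symbol `⟨l, D⟩` of arity `N` holds of an injective tuple whose pairwise
`obs`-sequences begin with `D`. -/
abbrev diagramStructure : (diagramLang V).Structure M where
  funMap f := isEmptyElim f
  RelMap r x := Function.Injective x ∧ ∀ i j (m : Fin r.1), obs (x i) (x j) m = r.2 i j m

def diagram {N : ℕ} (a : Fin N → M) (l : ℕ) : (diagramLang V).Formula (Fin N) :=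
  Relations.formula (⟨l, fun i j m => obs (a i) (a j) m⟩ : (diagramLang V).Relations N) Term.var

theorem isQF_diagram {N : ℕ} (a : Fin N → M) (l : ℕ) : (diagram obs a l).IsQF :=
  (BoundedFormula.IsAtomic.rel _ _).isQF

theorem realize_diagram {N : ℕ} (a b : Fin N → M) (l : ℕ) :
    @Formula.Realize _ _ (diagramStructure obs) _ (diagram obs a l) b ↔
      Function.Injective b ∧ ∀ i j, obs (b i) (b j) ∈ cylinder (obs (a i) (a j)) l := by
  show (Function.Injective fun i => b i) ∧
      (∀ i j (m : Fin l), obs (b i) (b j) m = obs (a i) (a j) m) ↔ _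
  simp only [mem_cylinder_iff]
  exact and_congr_right fun _ => forall₂_congr fun i j => ⟨fun h m hm => h ⟨m, hm⟩,
    fun h m => h m m.2⟩

end Diagram

section Copies

open PiNat

variable {M V : Type} (obs : M → M → ℕ → V) {κ : Cardinal.{0}}

def Mimics (l : ℕ) (W : Set M) (ρ : M → M) : Prop :=
  ∀ x ∈ W, ∀ y ∈ W, (ρ x = ρ y → x = y) → obs x y ∈ cylinder (obs (ρ x) (ρ y)) l

variable {obs}

theorem mimics_id (l : ℕ) (W : Set M) : Mimics obs l W id :=
  fun _ _ _ _ _ => self_mem_cylinder _ _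

theorem Mimics.comp {l : ℕ} {W W' : Set M} {ρ ρ' : M → M} (h : Mimics obs l W ρ)
    (h' : Mimics obs l W' ρ') (hmaps : Set.MapsTo ρ' W' W) : Mimics obs l W' (ρ ∘ ρ') := by
  intro x hx y hy hxy
  have h₁ := h' x hx y hy fun he => hxy (congrArg ρ he)
  have h₂ := h (ρ' x) (hmaps hx) (ρ' y) (hmaps hy) fun he => congrArg ρ' (hxy he)
  exact fun m hm => (h₁ m hm).trans (h₂ m hm)

theorem exists_mimickingCopy_of_rkGe_succ [DecidableEq M] {W : Set M} {β : Ordinal.{0}}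
    (h : @rkGe _ M (diagramStructure obs) 0 κ (β + 1) W) {k : M} (hk : k ∈ W) (l : ℕ) :
    ∃ c ∉ W, @rkGe _ M (diagramStructure obs) 0 κ β (insert c W) ∧
      Mimics obs l (insert c W) (Function.update id c k) := by
  let _ := diagramStructure obs
  have hW : W.Finite := by rw [rkGe_succ] at h; exact h.1
  obtain ⟨N, a, ha, rfl⟩ := hW.fin_param
  obtain ⟨k, rfl⟩ := hk
  obtain ⟨c, hck, hrk, hdiag⟩ := exists_update_of_rkGe_succ ha h k (isQF_diagram obs a l)
    ((realize_diagram obs a a l).2 ⟨ha, fun _ _ => self_mem_cylinder _ _⟩)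
  obtain ⟨hinj, hcyl⟩ := (realize_diagram obs a _ l).1 hdiag
  have hca : ∀ j, c ≠ a j := by
    rintro j rfl
    have hj : j ≠ k := fun hj => hck (hj ▸ rfl)
    exact hj (hinj (by simp [Function.update_of_ne hj])).symm
  have hρc : Function.update id c (a k) c = a k := Function.update_self ..
  have hρa : ∀ j, Function.update id c (a k) (a j) = a j :=
    fun j => Function.update_of_ne (hca j).symm ..
  refine ⟨c, fun ⟨j, hj⟩ => hca j hj.symm, hrk, ?_⟩
  rintro x (rfl | ⟨i, rfl⟩) y (rfl | ⟨j, rfl⟩) hxy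
  · simpa [hρc] using hcyl k k
  · rw [hρc, hρa]
    rcases eq_or_ne j k with rfl | hj
    · exact absurd (hxy (hρc.trans (hρa j).symm)) (hca j)
    · simpa [Function.update_of_ne hj] using hcyl k j
  · rw [hρc, hρa]
    rcases eq_or_ne i k with rfl | hi
    · exact absurd (hxy ((hρa i).trans hρc.symm)).symm (hca i)
    · simpa [Function.update_of_ne hi] using hcyl i k
  · rw [hρa, hρa]
    exact self_mem_cylinder _ _

theorem exists_mimickingCopies (l : ℕ) {W : Set M} (T : Finset M) (hT : ↑T ⊆ W)
    {β : Ordinal.{0}} (h : @rkGe _ M (diagramStructure obs) 0 κ (β + T.card) W) :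
    ∃ c ρ : M → M, (∀ t ∈ T, c t ∉ W ∧ ρ (c t) = t) ∧ Set.EqOn ρ id W ∧
      @rkGe _ M (diagramStructure obs) 0 κ β (W ∪ c '' T) ∧ Mimics obs l (W ∪ c '' T) ρ := by
  classical
  induction T using Finset.induction_on generalizing β with
  | empty =>
    exact ⟨id, id, by simp, Set.eqOn_refl _ _, by simpa using h, mimics_id l _⟩
  | insert k T hkT ih =>
    rw [Finset.coe_insert, Set.insert_subset_iff] at hT
    rw [Finset.card_insert_of_notMem hkT, Nat.add_comm, Nat.cast_add, Nat.cast_one,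
      ← add_assoc] at h
    obtain ⟨c, ρ, hc, hρ, hrk, hmim⟩ := ih hT.2 h
    obtain ⟨c', hc', hrk', hmim'⟩ := exists_mimickingCopy_of_rkGe_succ hrk (Or.inl hT.1) l
    have hcT : ∀ t ∈ T, c t ≠ c' := fun t ht he => hc' (Or.inr (he ▸ ⟨t, ht, rfl⟩))
    have hWc' : ∀ x ∈ W, x ≠ c' := fun x hx he => hc' (Or.inl (he ▸ hx))
    have hset : W ∪ Function.update c k c' '' ↑(insert k T) = insert c' (W ∪ c '' T) := by
      rw [Finset.coe_insert, Set.image_insert_eq, Function.update_self,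
        Set.image_congr fun t ht => Function.update_of_ne (ne_of_mem_of_not_mem ht hkT) ..,
        Set.union_insert]
    refine ⟨Function.update c k c', ρ ∘ Function.update id c' k, ?_, ?_, hset ▸ hrk', hset ▸ ?_⟩
    · simp only [Finset.mem_insert, forall_eq_or_imp, Function.update_self, Function.comp_apply]
      refine ⟨⟨fun hW => hWc' _ hW rfl, hρ hT.1⟩, fun t ht => ?_⟩
      rw [Function.update_of_ne (ne_of_mem_of_not_mem ht hkT),
        Function.update_of_ne (hcT t ht)]
      exact hc t ht
    · intro x hx
      simp [Function.update_of_ne (hWc' x hx), hρ hx]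
    · refine hmim.comp hmim' fun x hx => ?_
      rcases hx with rfl | hx
      · simpa using Or.inl hT.1
      · rwa [Function.update_of_ne fun he : x = c' => hc' (he ▸ hx)]

/-- `Fin.snoc s false` keeps the point of `s`, and `Fin.snoc s true` takes its fresh copy. -/
theorem exists_doubledConfig (l : ℕ) {n : ℕ} {X Y : (Fin n → Bool) → M}
    (hXY : ∀ s t, X s ≠ Y t) {β : Ordinal.{0}} (h : @rkGe _ M (diagramStructure obs) 0 κ
      (β + (2 ^ (n + 1) : ℕ)) (Set.range X ∪ Set.range Y)) :
    ∃ X' Y' : (Fin (n + 1) → Bool) → M, (∀ s t, X' s ≠ Y' t) ∧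
      @rkGe _ M (diagramStructure obs) 0 κ β (Set.range X' ∪ Set.range Y') ∧
      (∀ s t, obs (X' s) (Y' t) ∈ cylinder (obs (X (Fin.init s)) (Y (Fin.init t))) l) ∧
      (∀ s, X' (Fin.snoc s false) ≠ X' (Fin.snoc s true)) ∧
      (∀ t, Y' (Fin.snoc t false) ≠ Y' (Fin.snoc t true)) := by
  classical
  let _ := diagramStructure obs
  set T : Finset M := Finset.univ.image X ∪ Finset.univ.image Y
  have hT : (T : Set M) = Set.range X ∪ Set.range Y := by simp [T]
  have hcard : T.card ≤ 2 ^ (n + 1) := calc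
    T.card ≤ 2 ^ n + 2 ^ n := (Finset.card_union_le _ _).trans <|
      add_le_add (Finset.card_image_le.trans (by simp)) (Finset.card_image_le.trans (by simp))
    _ = 2 ^ (n + 1) := by ring
  obtain ⟨c, ρ, hc, hρ, hrk, hmim⟩ :=
    exists_mimickingCopies l T hT.le (rkGe_anti (add_le_add_right (Nat.cast_le.2 hcard) β) h)
  let double (Z : (Fin n → Bool) → M) (s : Fin (n + 1) → Bool) : M :=
    bif s (Fin.last n) then c (Z (Fin.init s)) else Z (Fin.init s)
  have hdouble : ∀ Z : (Fin n → Bool) → M, (∀ s, Z s ∈ T) → ∀ s,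
      double Z s ∈ (Set.range X ∪ Set.range Y) ∪ c '' T ∧ ρ (double Z s) = Z (Fin.init s) := by
    intro Z hZ s
    cases hs : s (Fin.last n) <;> simp only [double, hs, cond_false, cond_true]
    · exact ⟨Or.inl (hT.le (hZ _)), hρ (hT.le (hZ _))⟩
    · exact ⟨Or.inr ⟨_, hZ _, rfl⟩, (hc _ (hZ _)).2⟩
  have hsplit : ∀ Z : (Fin n → Bool) → M, (∀ s, Z s ∈ T) → ∀ s,
      double Z (Fin.snoc s false) ≠ double Z (Fin.snoc s true) := by
    intro Z hZ s he
    simp only [double, Fin.snoc_last, Fin.init_snoc, cond_false, cond_true] at he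
    exact (hc _ (hZ s)).1 (he ▸ hT.le (hZ s))
  have hX : ∀ s, X s ∈ T := fun s => by simp [T]
  have hY : ∀ t, Y t ∈ T := fun t => by simp [T]
  refine ⟨double X, double Y, fun s t he => ?_, ?_, fun s t => ?_, hsplit X hX, hsplit Y hY⟩
  · exact hXY _ _ ((hdouble X hX s).2.symm.trans (he ▸ (hdouble Y hY t).2))
  · refine rkGe_mono β ?_ ⟨_, Or.inl ⟨fun _ => false, rfl⟩⟩ hrk
    rintro _ (⟨s, rfl⟩ | ⟨t, rfl⟩)
    exacts [(hdouble X hX s).1, (hdouble Y hY t).1]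
  · have := hmim _ (hdouble X hX s).1 _ (hdouble Y hY t).1 fun he =>
      absurd (((hdouble X hX s).2.symm.trans he).trans (hdouble Y hY t).2) (hXY _ _)
    rwa [(hdouble X hX s).2, (hdouble Y hY t).2] at this

end Copies

section Fusion

open Cardinal Filter PiNat

theorem add_natCast_lt_ord_aleph_one {β : Ordinal.{0}} (hβ : β < (aleph 1).ord) (k : ℕ) :
    β + k < (aleph 1).ord :=
  Ordinal.isPrincipal_add_ord (aleph0_le_aleph 1) hβ
    (lt_ord.2 (by simp [(natCast_lt_aleph0 (n := k)).trans aleph0_lt_aleph_one]))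

theorem exists_cofinal_fiber {C : Type} [Countable C] (F : Set.Iio (aleph.{0} 1).ord → C) :
    ∃ c, ∀ β, ∃ β', β ≤ β' ∧ F β' = c := by
  by_contra! h
  choose g hg using h
  have hsup : ⨆ c, (g c : Ordinal.{0}) < (aleph 1).ord := Ordinal.iSup_lt_of_lt_cof
    (by rw [isRegular_aleph_one.cof_ord]; exact mk_le_aleph0.trans_lt aleph0_lt_aleph_one)
    fun c => (g c).2
  exact hg _ ⟨_, hsup⟩ (Ordinal.le_iSup (fun c => (g c : Ordinal.{0})) (F ⟨_, hsup⟩)) rfl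

variable {M : Type} (xv yv : M → ℕ → Bool) (eta : M → M → ℕ → ℕ) (κ : Cardinal.{0})

def pairCode (p q : M) (m : ℕ) : Bool × Bool × ℕ := (xv p m, yv q m, eta p q m)

/-- The first `level` values of the `pairCode`s of a configuration indexed by `Fin n → Bool`
on both sides. -/
structure Pattern (n : ℕ) where
  level : ℕ
  code : (Fin n → Bool) → (Fin n → Bool) → Fin level → Bool × Bool × ℕ

instance (n : ℕ) : Countable (Pattern n) := by
  refine Function.Injective.countable (f := fun P : Pattern n =>
    (⟨P.level, P.code⟩ : Σ l, (Fin n → Bool) → (Fin n → Bool) → Fin l → Bool × Bool × ℕ)) ?_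
  rintro ⟨⟩ ⟨⟩ h
  cases h
  rfl

structure Pattern.Extends {n : ℕ} (P : Pattern n) (P' : Pattern (n + 1)) : Prop where
  level_lt : P.level < P'.level
  code_castLE : ∀ s t (m : Fin P.level),
    P'.code s t (Fin.castLE level_lt.le m) = P.code (Fin.init s) (Fin.init t) m
  split_left : ∀ s t, ∃ m, (P'.code (Fin.snoc s false) t m).1 ≠ (P'.code (Fin.snoc s true) t m).1
  split_right : ∀ s t,
    ∃ m, (P'.code s (Fin.snoc t false) m).2.1 ≠ (P'.code s (Fin.snoc t true) m).2.1

def RealizedAt {n : ℕ} (P : Pattern n) (β : Ordinal.{0}) : Prop :=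
  ∃ X Y : (Fin n → Bool) → M, (∀ s t, X s ≠ Y t) ∧
    @rkGe _ M (diagramStructure (pairCode xv yv eta)) 0 κ β (Set.range X ∪ Set.range Y) ∧
    ∀ s t (m : Fin P.level), pairCode xv yv eta (X s) (Y t) m = P.code s t m

def Good {n : ℕ} (P : Pattern n) : Prop :=
  ∀ β < (aleph 1).ord, RealizedAt xv yv eta κ P β

variable {xv yv eta κ}

theorem RealizedAt.anti {n : ℕ} {P : Pattern n} {β γ : Ordinal.{0}} (h : RealizedAt xv yv eta κ P γ)
    (hle : β ≤ γ) : RealizedAt xv yv eta κ P β := by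
  let _ := diagramStructure (pairCode xv yv eta)
  obtain ⟨X, Y, hXY, hrk, hcode⟩ := h
  exact ⟨X, Y, hXY, rkGe_anti hle hrk, hcode⟩

theorem Good.exists_extends_realizedAt (hxv : Function.Injective xv)
    (hyv : Function.Injective yv) {n : ℕ} {P : Pattern n} (hP : Good xv yv eta κ P)
    {β : Ordinal.{0}} (hβ : β < (aleph 1).ord) :
    ∃ P', P.Extends P' ∧ RealizedAt xv yv eta κ P' β := by
  classical
  obtain ⟨X, Y, hXY, hrk, hcode⟩ := hP _ (add_natCast_lt_ord_aleph_one hβ (2 ^ (n + 1)))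
  obtain ⟨X', Y', hXY', hrk', hcyl, hsX, hsY⟩ := exists_doubledConfig P.level hXY hrk
  have hvisible : ∀ {Z : (Fin (n + 1) → Bool) → M} {v : M → ℕ → Bool}, Function.Injective v →
      (∀ s, Z (Fin.snoc s false) ≠ Z (Fin.snoc s true)) →
      ∀ᶠ l in atTop, ∀ s, ∃ m < l, v (Z (Fin.snoc s false)) m ≠ v (Z (Fin.snoc s true)) m := by
    refine fun hv hZ => eventually_all.2 fun s => ?_
    obtain ⟨m, hm⟩ := Function.ne_iff.1 (hv.ne (hZ s))
    exact eventually_atTop.2 ⟨m + 1, fun l hl => ⟨m, hl, hm⟩⟩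
  obtain ⟨l, hlP, hlX, hlY⟩ := ((eventually_gt_atTop P.level).and
    ((hvisible hxv hsX).and (hvisible hyv hsY))).exists
  refine ⟨⟨l, fun s t m => pairCode xv yv eta (X' s) (Y' t) m⟩, ⟨hlP, fun s t m => ?_,
    fun s _ => ?_, fun _ t => ?_⟩, X', Y', hXY', hrk', fun _ _ _ => rfl⟩
  · exact (hcyl s t m m.2).trans (hcode _ _ m)
  · obtain ⟨m, hm, hne⟩ := hlX s
    exact ⟨⟨m, hm⟩, hne⟩
  · obtain ⟨m, hm, hne⟩ := hlY t
    exact ⟨⟨m, hm⟩, hne⟩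

theorem Good.exists_extends_good (hxv : Function.Injective xv) (hyv : Function.Injective yv)
    {n : ℕ} {P : Pattern n} (hP : Good xv yv eta κ P) :
    ∃ P', P.Extends P' ∧ Good xv yv eta κ P' := by
  choose F hF using fun β : Set.Iio (aleph 1).ord => hP.exists_extends_realizedAt hxv hyv β.2
  obtain ⟨P', hP'⟩ := exists_cofinal_fiber F
  refine ⟨P', ?_, fun β hβ => ?_⟩
  · obtain ⟨β', -, rfl⟩ := hP' ⟨0, ord_pos.2 (aleph_pos 1)⟩
    exact (hF β').1
  · obtain ⟨β', hle, rfl⟩ := hP' ⟨β, hβ⟩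
    exact (hF β').2.anti hle

theorem good_levelZero (hrk : ∀ β < (aleph 1).ord, ∃ w : Set M, w.Finite ∧
      w.Nonempty ∧ @rkGe _ M (diagramStructure (pairCode xv yv eta)) 0 κ β w) :
    Good xv yv eta κ (⟨0, fun _ _ => Fin.elim0⟩ : Pattern 0) := by
  classical
  let _ := diagramStructure (pairCode xv yv eta)
  intro β hβ
  obtain ⟨w, -, ⟨x, hx⟩, hw⟩ := hrk (β + 1) (by simpa using add_natCast_lt_ord_aleph_one hβ 1)
  obtain ⟨c, hc, hrkc, -⟩ := exists_mimickingCopy_of_rkGe_succ hw hx 0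
  refine ⟨fun _ => x, fun _ => c, fun _ _ h => hc ((show x = c from h) ▸ hx),
    rkGe_mono β ?_ ⟨x, Or.inl ⟨Fin.elim0, rfl⟩⟩ hrkc, fun _ _ m => m.elim0⟩
  rintro _ (⟨_, rfl⟩ | ⟨_, rfl⟩)
  exacts [Or.inr hx, Or.inl rfl]

theorem exists_good_chain (hxv : Function.Injective xv)
    (hyv : Function.Injective yv) (hrk : ∀ β < (aleph 1).ord, ∃ w : Set M, w.Finite ∧
      w.Nonempty ∧ @rkGe _ M (diagramStructure (pairCode xv yv eta)) 0 κ β w) :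
    ∃ P : ∀ n, Pattern n, ∀ n, Good xv yv eta κ (P n) ∧ (P n).Extends (P (n + 1)) := by
  choose next hnext using fun n (P : {P : Pattern n // Good xv yv eta κ P}) =>
    P.2.exists_extends_good hxv hyv
  let P : ∀ n, {P : Pattern n // Good xv yv eta κ P} := fun n =>
    Nat.rec ⟨_, good_levelZero hrk⟩ (fun n P => ⟨next n P, (hnext n P).2⟩) n
  exact ⟨fun n => (P n).1, fun n => ⟨(P n).2, (hnext n (P n)).1⟩⟩

end Fusion

section TreeLimit

open Filter Topology PiNat

theorem tendsto_of_mem_cylinder {V : Type*} [TopologicalSpace V] {a : ℕ → ℕ → V} {x : ℕ → V}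
    {l : ℕ → ℕ} (hl : Tendsto l atTop atTop) (h : ∀ n, x ∈ cylinder (a n) (l n)) :
    Tendsto a atTop (𝓝 x) :=
  tendsto_pi_nhds.2 fun i =>
    tendsto_const_nhds.congr' ((hl.eventually_gt_atTop i).mono fun n hn => h n i hn)

theorem accPt_univ_cantor (ξ : ℕ → Bool) : AccPt ξ (𝓟 Set.univ) := by
  have hlim : Tendsto (fun n => Function.update ξ n (!ξ n)) atTop (𝓝 ξ) :=
    tendsto_of_mem_cylinder tendsto_id fun n =>
      (mem_cylinder_comm _ _ _).1 (update_mem_cylinder ξ n _)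
  refine accPt_iff_frequently.2 (hlim.frequently (Frequently.of_forall fun n => ⟨?_, trivial⟩))
  exact fun h => by simpa using congrFun h n

theorem perfect_range_of_continuous_injective {X : Type*} [TopologicalSpace X] [T2Space X]
    {g : (ℕ → Bool) → X} (hg : Continuous g) (hinj : Function.Injective g) :
    Perfect (Set.range g) := by
  refine ⟨(isCompact_range hg).isClosed, ?_⟩
  rintro _ ⟨ξ, rfl⟩
  simpa only [map_principal, Set.image_univ] using (accPt_univ_cantor ξ).map hg.continuousAt hinj

variable {W V : Type*} {l : ℕ → ℕ} {T : ∀ n, (Fin n → W) → ℕ → V}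

/-- The limit of the nodes along the branch `ξ` when consecutive nodes agree below strictly
increasing levels (`treeLimit_mem_cylinder`). -/
def treeLimit (T : ∀ n, (Fin n → W) → ℕ → V) (ξ : ℕ → W) : ℕ → V :=
  fun m => T (m + 1) (fun i => ξ i) m

theorem tree_mem_cylinder_of_le (hl : Monotone l)
    (hT : ∀ n s, T (n + 1) s ∈ cylinder (T n (Fin.init s)) (l n)) (ξ : ℕ → W) {n n' : ℕ}
    (h : n ≤ n') : T n' (fun i => ξ i) ∈ cylinder (T n (fun i => ξ i)) (l n) := by
  induction n', h using Nat.le_induction with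
  | base => exact self_mem_cylinder _ _
  | succ n' hn ih => exact fun m hm => (hT n' _ m (hm.trans_le (hl hn))).trans (ih m hm)

theorem treeLimit_mem_cylinder (hl : StrictMono l)
    (hT : ∀ n s, T (n + 1) s ∈ cylinder (T n (Fin.init s)) (l n)) (ξ : ℕ → W) (n : ℕ) :
    treeLimit T ξ ∈ cylinder (T n (fun i => ξ i)) (l n) := by
  intro m hm
  rcases le_total n (m + 1) with h | h
  · exact tree_mem_cylinder_of_le hl.monotone hT ξ h m hm
  · exact (tree_mem_cylinder_of_le hl.monotone hT ξ h m ((Nat.lt_succ_self m).trans_le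
      (hl.id_le _))).symm

theorem continuous_treeLimit [TopologicalSpace W] [DiscreteTopology W] [TopologicalSpace V]
    (T : ∀ n, (Fin n → W) → ℕ → V) : Continuous (treeLimit T) :=
  continuous_pi fun m => (continuous_of_discreteTopology
    (f := fun s : Fin (m + 1) → W => T (m + 1) s m)).comp
    (continuous_pi fun i => continuous_apply (i : ℕ))

theorem treeLimit_injective {T : ∀ n, (Fin n → Bool) → ℕ → V} (hl : StrictMono l)
    (hT : ∀ n s, T (n + 1) s ∈ cylinder (T n (Fin.init s)) (l n))
    (hsplit : ∀ n s,
      T (n + 1) (Fin.snoc s false) ∉ cylinder (T (n + 1) (Fin.snoc s true)) (l (n + 1))) :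
    Function.Injective (treeLimit T) := by
  intro ξ ζ hξζ
  by_contra hne
  set n := firstDiff ξ ζ
  have hprefix : (fun i : Fin n => ξ i) = fun i : Fin n => ζ i :=
    funext fun i => apply_eq_of_lt_firstDiff i.2
  have hrestr : ∀ η : ℕ → Bool,
      (fun i : Fin (n + 1) => η i) = Fin.snoc (fun i : Fin n => η i) (η n) :=
    fun η => (Fin.snoc_init_self _).symm
  -- both restrictions to `n + 1` lie below the common branch
  have hagree : T (n + 1) (fun i => ξ i) ∈ cylinder (T (n + 1) (fun i => ζ i)) (l (n + 1)) := by
    have hξ := mem_cylinder_iff_eq.1 (treeLimit_mem_cylinder hl hT ξ (n + 1))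
    have hζ := mem_cylinder_iff_eq.1 (hξζ ▸ treeLimit_mem_cylinder hl hT ζ (n + 1))
    rw [← hζ, hξ]
    exact self_mem_cylinder _ _
  rw [hrestr ξ, hrestr ζ, hprefix] at hagree
  have hdiff : ξ n ≠ ζ n := apply_firstDiff_ne hne
  cases hξn : ξ n <;> cases hζn : ζ n <;> rw [hξn, hζn] at hagree
  · exact hdiff (hξn.trans hζn.symm)
  · exact hsplit n _ hagree
  · exact hsplit n _ ((mem_cylinder_comm _ _ _).1 hagree)
  · exact hdiff (hξn.trans hζn.symm)

end TreeLimit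

section Scheme

open Cardinal Filter Topology PiNat

variable {M : Type} {xv yv : M → ℕ → Bool} {eta : M → M → ℕ → ℕ}

theorem pairCode_mem_cylinder_iff {p q p' q' : M} {l : ℕ} :
    pairCode xv yv eta p q ∈ cylinder (pairCode xv yv eta p' q') l ↔
      xv p ∈ cylinder (xv p') l ∧ yv q ∈ cylinder (yv q') l ∧
        eta p q ∈ cylinder (eta p' q') l := by
  simp only [mem_cylinder_iff, pairCode, Prod.mk.injEq, ← forall_and]

variable (xv yv eta) in
structure RectangleScheme where
  level : ℕ → ℕ
  level_strictMono : StrictMono level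
  X : ∀ n, (Fin n → Bool) → M
  Y : ∀ n, (Fin n → Bool) → M
  coherent : ∀ n s t, pairCode xv yv eta (X (n + 1) s) (Y (n + 1) t) ∈
    cylinder (pairCode xv yv eta (X n (Fin.init s)) (Y n (Fin.init t))) (level n)
  split_left : ∀ n s, xv (X (n + 1) (Fin.snoc s false)) ∉
    cylinder (xv (X (n + 1) (Fin.snoc s true))) (level (n + 1))
  split_right : ∀ n t, yv (Y (n + 1) (Fin.snoc t false)) ∉
    cylinder (yv (Y (n + 1) (Fin.snoc t true))) (level (n + 1))

theorem exists_rectangleScheme (hxv : Function.Injective xv)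
    (hyv : Function.Injective yv) {κ : Cardinal.{0}} (hrk : ∀ β < (aleph 1).ord,
      ∃ w : Set M, w.Finite ∧ w.Nonempty ∧
        @rkGe _ M (diagramStructure (pairCode xv yv eta)) 0 κ β w) :
    Nonempty (RectangleScheme xv yv eta) := by
  obtain ⟨P, hP⟩ := exists_good_chain hxv hyv hrk
  choose X Y _ _ hcode using fun n => (hP n).1 0 (ord_pos.2 (aleph_pos 1))
  refine ⟨⟨fun n => (P n).level, strictMono_nat_of_lt_succ fun n => (hP n).2.level_lt, X, Y,
    fun n s t m hm => ?_, fun n s => ?_, fun n t => ?_⟩⟩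
  · exact (hcode (n + 1) s t ⟨m, hm.trans (hP n).2.level_lt⟩).trans
      (((hP n).2.code_castLE s t ⟨m, hm⟩).trans (hcode n _ _ ⟨m, hm⟩).symm)
  · obtain ⟨m, hm⟩ := (hP n).2.split_left s fun _ => false
    rw [← hcode, ← hcode] at hm
    exact fun h => hm (h m m.2)
  · obtain ⟨m, hm⟩ := (hP n).2.split_right (fun _ => false) t
    rw [← hcode, ← hcode] at hm
    exact fun h => hm (h m m.2)

theorem RectangleScheme.exists_perfect_rectangle (S : RectangleScheme xv yv eta)
    {f : (ℕ → ℕ) → (ℕ → Bool) × (ℕ → Bool)} (hf : Continuous f)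
    (heta : ∀ p q, f (eta p q) = (xv p, yv q)) :
    ∃ P₁ P₂ : Set (ℕ → Bool), Perfect P₁ ∧ P₁.Nonempty ∧ Perfect P₂ ∧ P₂.Nonempty ∧
      P₁ ×ˢ P₂ ⊆ Set.range f := by
  let TX : ∀ n, (Fin n → Bool) → ℕ → Bool := fun n s => xv (S.X n s)
  let TY : ∀ n, (Fin n → Bool) → ℕ → Bool := fun n t => yv (S.Y n t)
  let TZ : ∀ n, (Fin n → Bool × Bool) → ℕ → ℕ :=
    fun n st => eta (S.X n fun i => (st i).1) (S.Y n fun i => (st i).2)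
  have hTX : ∀ n s, TX (n + 1) s ∈ cylinder (TX n (Fin.init s)) (S.level n) :=
    fun n s => (pairCode_mem_cylinder_iff.1 (S.coherent n s fun _ => false)).1
  have hTY : ∀ n t, TY (n + 1) t ∈ cylinder (TY n (Fin.init t)) (S.level n) :=
    fun n t => (pairCode_mem_cylinder_iff.1 (S.coherent n (fun _ => false) t)).2.1
  have hTZ : ∀ n st, TZ (n + 1) st ∈ cylinder (TZ n (Fin.init st)) (S.level n) :=
    fun n st => (pairCode_mem_cylinder_iff.1 (S.coherent n _ _)).2.2
  have hmono := S.level_strictMono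
  refine ⟨_, _, perfect_range_of_continuous_injective (continuous_treeLimit TX)
      (treeLimit_injective hmono hTX S.split_left), Set.range_nonempty _,
    perfect_range_of_continuous_injective (continuous_treeLimit TY)
      (treeLimit_injective hmono hTY S.split_right), Set.range_nonempty _, ?_⟩
  rintro ⟨_, _⟩ ⟨⟨ξ, rfl⟩, ⟨ζ, rfl⟩⟩
  -- `range f` need not be closed: the witness is the limit of the `eta`s along the branches
  have hlim := fun {W V : Type} [TopologicalSpace V] (T : ∀ n, (Fin n → W) → ℕ → V) hT
      (η : ℕ → W) => tendsto_of_mem_cylinder hmono.tendsto_atTop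
    (treeLimit_mem_cylinder (T := T) hmono hT η)
  refine ⟨treeLimit TZ fun i => (ξ i, ζ i), tendsto_nhds_unique
    ((hf.tendsto _).comp (hlim TZ hTZ _)) ?_⟩
  simpa only [Function.comp_def, TX, TY, TZ, heta] using
    (hlim TX hTX ξ).prodMk_nhds (hlim TY hTY ζ)

end Scheme

theorem Pr.nonempty {l : ℕ} {α : Ordinal.{0}} {lam bound θ : Cardinal.{0}}
    (h : Pr l α lam bound θ) (hα : 0 < α) (M : Type) (hM : Cardinal.mk M = lam) :
    Nonempty M :=
  let ⟨_, _, ⟨x, _⟩, _⟩ :=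
    h Language.empty M Language.emptyStructure hM (by simp [Language.card_empty]) 0 hα
  ⟨x⟩

/-- if `Pr_{ω₁}(λ)` and an analytic set `B ⊆ 2^ω × 2^ω` contains a
`(λ, λ)`-rectangle, then `B` contains a perfect rectangle. -/
theorem stmt_9 (lam : Cardinal.{0})
    (hPr : Pr 0 (Cardinal.aleph 1).ord lam (Cardinal.aleph 1) ℵ₀)
    (B : Set ((ℕ → Bool) × (ℕ → Bool))) (hB : MeasureTheory.AnalyticSet B)
    (A₁ A₂ : Set (ℕ → Bool)) (hA₁ : Cardinal.mk A₁ = lam) (hA₂ : Cardinal.mk A₂ = lam)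
    (hAB : A₁ ×ˢ A₂ ⊆ B) :
    ∃ P₁ P₂ : Set (ℕ → Bool),
      Perfect P₁ ∧ P₁.Nonempty ∧ Perfect P₂ ∧ P₂.Nonempty ∧ P₁ ×ˢ P₂ ⊆ B := by
  obtain ⟨a⟩ := hPr.nonempty (ord_pos.2 (aleph_pos 1)) A₁ hA₁
  obtain ⟨e⟩ : Nonempty (A₁ ≃ A₂) := Cardinal.eq.1 (hA₁.trans hA₂.symm)
  rw [MeasureTheory.AnalyticSet_def] at hB
  obtain ⟨f, hf, rfl⟩ :=
    hB.resolve_left (Set.nonempty_iff_ne_empty.1 ⟨_, hAB (Set.mk_mem_prod a.2 (e a).2)⟩)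
  choose eta heta using fun p q : A₁ => hAB (Set.mk_mem_prod p.2 (e q).2)
  obtain ⟨S⟩ := exists_rectangleScheme (eta := eta) Subtype.val_injective
    (Subtype.val_injective.comp e.injective) (hPr _ _ _ hA₁ (diagramLang_card_le _))
  exact S.exists_perfect_rectangle hf heta

end Sh522
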